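/- Correctness of the extended-relational-algebra join: if extended X-relation ℛ is an answer to formula α₁(x̄) with respect to 𝒜 and extended Y-relation 𝒮 is an answer to α₂(ȳ) with respect to 𝒜, then ℛ ⋈ 𝒮 is an answer to α₁(x̄) ∧ α₂(ȳ) with respect to 𝒜, i.e., for every instantiation ā of X∪Y, δ_{ℛ⋈𝒮}(ā) is a reduced grounding of (α₁ ∧ α₂)[ā] over 𝒜. -/

import Mathlib

/-- Terms over domain `D`: variables (named by naturals) or constants `ã` for
domain elements `a ∈ D` (with the intended interpretation built in). -/
inductive Term (D : Type) where
  | var : ℕ → Term D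
  | const : D → Term D

/-- NNF first-order formulas over relational vocabulary `Rel` with arities `ar`:
atoms, negated atoms, conjunctions/disjunctions of arbitrary arity, quantifiers. -/
inductive Formula (D Rel : Type) (ar : Rel → ℕ) where
  | atom  : (r : Rel) → (Fin (ar r) → Term D) → Formula D Rel ar
  | natom : (r : Rel) → (Fin (ar r) → Term D) → Formula D Rel ar
  | conj  : List (Formula D Rel ar) → Formula D Rel ar
  | disj  : List (Formula D Rel ar) → Formula D Rel ar
  | all   : ℕ → Formula D Rel ar → Formula D Rel ar
  | ex    : ℕ → Formula D Rel ar → Formula D Rel ar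

variable {D Rel : Type} {ar : Rel → ℕ}

/-- Term evaluation: constants `ã` denote `a` (the intended interpretation). -/
def tval (ν : ℕ → D) : Term D → D
  | .var n => ν n
  | .const a => a

/-- Satisfaction in a total structure interpreting each relation symbol. -/
def eval (I : (r : Rel) → (Fin (ar r) → D) → Prop) :
    Formula D Rel ar → (ℕ → D) → Prop
  | .atom r args, ν => I r fun i => tval ν (args i)
  | .natom r args, ν => ¬ I r fun i => tval ν (args i)
  | .conj l, ν => ∀ ψ ∈ l.attach, eval I ψ.1 ν
  | .disj l, ν => ∃ ψ ∈ l.attach, eval I ψ.1 ν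
  | .all x ψ, ν => ∀ a : D, eval I ψ (Function.update ν x a)
  | .ex x ψ, ν => ∃ a : D, eval I ψ (Function.update ν x a)
decreasing_by all_goals first
  | (have h := List.sizeOf_lt_of_mem ψ.2; simp; omega)
  | simp


/-- A formula contains no instance vocabulary symbols. -/
def noInst (InstRel : Rel → Prop) : Formula D Rel ar → Prop
  | .atom r _ => ¬ InstRel r
  | .natom r _ => ¬ InstRel r
  | .conj l => ∀ ψ ∈ l.attach, noInst InstRel ψ.1
  | .disj l => ∀ ψ ∈ l.attach, noInst InstRel ψ.1
  | .all _ ψ => noInst InstRel ψ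
  | .ex _ ψ => noInst InstRel ψ
decreasing_by all_goals first
  | (have h := List.sizeOf_lt_of_mem ψ.2; simp; omega)
  | simp

/-- `I` is (the interpretation of) an expansion of the instance structure `𝒜`,
given by the interpretation `IA` of the instance predicates. -/
def expansionOf (InstRel : Rel → Prop)
    (IA : (r : Rel) → (Fin (ar r) → D) → Prop)
    (I : (r : Rel) → (Fin (ar r) → D) → Prop) : Prop :=
  ∀ r : Rel, InstRel r → ∀ t : Fin (ar r) → D, (I r t ↔ IA r t)

/-- An extended relation `R` (represented as assigning to each instantiation of
the variables a formula) is an answer to `α` with respect to `𝒜`: for every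
instantiation `ν`, the formula `δ_R(ν)` is a reduced grounding of `α[ν]` over
`𝒜`, i.e. it contains no instance symbols and, for every expansion of `𝒜`, it
is satisfied iff `α[ν]` is. -/
def Answer (InstRel : Rel → Prop)
    (IA : (r : Rel) → (Fin (ar r) → D) → Prop)
    (R : (ℕ → D) → Formula D Rel ar) (α : Formula D Rel ar) : Prop :=
  ∀ ν : ℕ → D, noInst InstRel (R ν) ∧
    ∀ I : (r : Rel) → (Fin (ar r) → D) → Prop, expansionOf InstRel IA I →
      (eval I α ν ↔ eval I (R ν) ν)

/-- The join of two extended relations: the associated formula of an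
instantiation is the conjunction of the two associated formulas. -/
def joinR (R S : (ℕ → D) → Formula D Rel ar) : (ℕ → D) → Formula D Rel ar :=
  fun ν => .conj [R ν, S ν]

section Conjunction

variable (I : (r : Rel) → (Fin (ar r) → D) → Prop) (InstRel : Rel → Prop)

theorem eval_conj (l : List (Formula D Rel ar)) (ν : ℕ → D) :
    eval I (.conj l) ν ↔ ∀ φ ∈ l, eval I φ ν := by
  rw [eval]
  exact ⟨fun h φ hφ => h ⟨φ, hφ⟩ (List.mem_attach _ _), fun h ψ _ => h ψ.1 ψ.2⟩

theorem eval_conj_pair (φ ψ : Formula D Rel ar) (ν : ℕ → D) :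
    eval I (.conj [φ, ψ]) ν ↔ eval I φ ν ∧ eval I ψ ν := by
  simp [eval_conj]

theorem noInst_conj (l : List (Formula D Rel ar)) :
    noInst InstRel (.conj l) ↔ ∀ φ ∈ l, noInst InstRel φ := by
  rw [noInst]
  exact ⟨fun h φ hφ => h ⟨φ, hφ⟩ (List.mem_attach _ _), fun h ψ _ => h ψ.1 ψ.2⟩

theorem noInst_conj_pair (φ ψ : Formula D Rel ar) :
    noInst InstRel (.conj [φ, ψ]) ↔ noInst InstRel φ ∧ noInst InstRel ψ := by
  simp [noInst_conj]

end Conjunction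

/-- correctness of the extended-relational-algebra join: if `R` is
an answer to `α₁` with respect to `𝒜` and `S` is an answer to `α₂` with respect
to `𝒜`, then `R ⋈ S` is an answer to `α₁ ∧ α₂` with respect to `𝒜`: for every
instantiation, the associated formula is a reduced grounding of the
corresponding instance of `α₁ ∧ α₂` over `𝒜`. -/
theorem join_correct (InstRel : Rel → Prop)
    (IA : (r : Rel) → (Fin (ar r) → D) → Prop)
    (R S : (ℕ → D) → Formula D Rel ar) (α₁ α₂ : Formula D Rel ar)
    (hR : Answer InstRel IA R α₁) (hS : Answer InstRel IA S α₂) :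
    Answer InstRel IA (joinR R S) (.conj [α₁, α₂]) := by
  intro ν
  obtain ⟨hR_reduced, hR_equiv⟩ := hR ν
  obtain ⟨hS_reduced, hS_equiv⟩ := hS ν
  refine ⟨(noInst_conj_pair InstRel _ _).2 ⟨hR_reduced, hS_reduced⟩, fun I hI => ?_⟩
  rw [joinR, eval_conj_pair, eval_conj_pair]
  exact and_congr (hR_equiv I hI) (hS_equiv I hI)
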